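/- Let -∞ ≤ a < b ≤ ∞, let n ∈ ℤ, let {x_k}_{k=n}^∞ ⊂ (a,b) be a strictly increasing sequence, and let {τ_k}_{k=n+1}^∞ be a geometrically decreasing sequence of positive numbers, i.e. sup_{k≥n+1} τ_{k+1}/τ_k < 1. Then there exist positive constants c₁, c₂ (depending only on the geometric decay ratio) such that for every nonnegative measurable function g on (a,b): c₁ · Σ_{k=n+1}^∞ τ_k · ess sup_{s∈(x_{k-1},x_k)} g(s) ≤ Σ_{k=n+1}^∞ τ_k · ess sup_{s∈(x_n,x_k)} g(s) ≤ c₂ · Σ_{k=n+1}^∞ τ_k · ess sup_{s∈(x_{k-1},x_k)} g(s). -/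

import Mathlib

/-!
The lower bound holds with `c₁ = 1`, since `(x_{k-1}, x_k) ⊆ (x_n, x_k)`. For the upper bound,
`(x_n, x_k)` is, up to the null set of points `x_j`, the union of the intervals `(x_{j-1}, x_j)`
with `n < j ≤ k`, so its essential supremum is at most the sum of theirs. Since
`τ_k ≤ ρ ^ (k - j) τ_j` for `j ≤ k`, the resulting double sum is dominated by the Cauchy product
of `∑ τ_j e_j` with the geometric series `∑ ρ ^ l = (1 - ρ)⁻¹`, which gives `c₂ = (1 - ρ)⁻¹`.
-/

open MeasureTheory ENNReal Set

noncomputable section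

/-- The open interval `(a, b)` of real numbers, with extended-real endpoints. -/
def Iab (a b : EReal) : Set ℝ := {x : ℝ | a < (x : EReal) ∧ (x : EReal) < b}

open Finset in
theorem ENNReal.tsum_mul_tsum_eq_tsum_sum_antidiagonal (a b : ℕ → ℝ≥0∞) :
    (∑' n, a n) * ∑' n, b n = ∑' n, ∑ kl ∈ antidiagonal n, a kl.1 * b kl.2 := by
  calc (∑' n, a n) * ∑' n, b n = ∑' p : ℕ × ℕ, a p.1 * b p.2 := by
        rw [ENNReal.tsum_prod (f := fun i j => a i * b j), ← ENNReal.tsum_mul_right]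
        simp_rw [← ENNReal.tsum_mul_left]
    _ = ∑' x : (Σ n, antidiagonal n), a x.2.1.1 * b x.2.1.2 :=
        (HasAntidiagonal.sigmaAntidiagonalEquivProd.tsum_eq (fun p => a p.1 * b p.2)).symm
    _ = _ := by
        rw [ENNReal.tsum_sigma']
        simp_rw [Finset.tsum_subtype (antidiagonal _) (fun kl => a kl.1 * b kl.2)]

theorem ENNReal.tsum_mul_tsum_eq_tsum_sum_range (a b : ℕ → ℝ≥0∞) :
    (∑' n, a n) * ∑' n, b n = ∑' n, ∑ k ∈ Finset.range (n + 1), a k * b (n - k) := by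
  simp_rw [ENNReal.tsum_mul_tsum_eq_tsum_sum_antidiagonal,
    Finset.Nat.sum_antidiagonal_eq_sum_range_succ fun k l ↦ a k * b l]

theorem le_pow_mul_of_le_mul_succ {ρ : ℝ≥0∞} {τ : ℕ → ℝ≥0∞} (hτ : ∀ i, τ (i + 1) ≤ ρ * τ i)
    (j l : ℕ) : τ (j + l) ≤ ρ ^ l * τ j := by
  induction l with
  | zero => simp
  | succ l ih =>
    calc τ (j + l + 1) ≤ ρ * τ (j + l) := hτ _
      _ ≤ ρ * (ρ ^ l * τ j) := by gcongr
      _ = ρ ^ (l + 1) * τ j := by ring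

theorem tsum_mul_sum_range_le_of_le_mul_succ {ρ : ℝ≥0∞} {τ : ℕ → ℝ≥0∞}
    (hτ : ∀ i, τ (i + 1) ≤ ρ * τ i) (e : ℕ → ℝ≥0∞) :
    ∑' i, τ i * ∑ j ∈ Finset.range (i + 1), e j ≤ (1 - ρ)⁻¹ * ∑' i, τ i * e i := by
  calc ∑' i, τ i * ∑ j ∈ Finset.range (i + 1), e j
      ≤ ∑' i, ∑ j ∈ Finset.range (i + 1), τ j * e j * ρ ^ (i - j) := by
        refine ENNReal.tsum_le_tsum fun i => ?_
        rw [Finset.mul_sum]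
        refine Finset.sum_le_sum fun j hj => ?_
        have hji : j + (i - j) = i := by grind
        calc τ i * e j = τ (j + (i - j)) * e j := by rw [hji]
          _ ≤ ρ ^ (i - j) * τ j * e j := by gcongr; exact le_pow_mul_of_le_mul_succ hτ j _
          _ = τ j * e j * ρ ^ (i - j) := by ring
    _ = (∑' i, τ i * e i) * ∑' l, ρ ^ l := (ENNReal.tsum_mul_tsum_eq_tsum_sum_range _ _).symm
    _ = (1 - ρ)⁻¹ * ∑' i, τ i * e i := by rw [ENNReal.tsum_geometric, mul_comm]

def natEquivIntLe (m : ℤ) : ℕ ≃ {k : ℤ // m ≤ k} where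
  toFun i := ⟨m + i, by omega⟩
  invFun k := (k.1 - m).toNat
  left_inv i := by simp
  right_inv k := by ext; simp; omega

theorem tsum_intLe_eq_tsum_nat (m : ℤ) (f : {k : ℤ // m ≤ k} → ℝ≥0∞) :
    ∑' k, f k = ∑' i : ℕ, f ⟨m + i, by omega⟩ :=
  ((natEquivIntLe m).tsum_eq f).symm

section EssSup

variable {α : Type*} [MeasurableSpace α] {μ : Measure α}

theorem essSup_restrict_union_le (f : α → ℝ≥0∞) (s t : Set α) :
    essSup f (μ.restrict (s ∪ t)) ≤ essSup f (μ.restrict s) ⊔ essSup f (μ.restrict t) := by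
  refine essSup_le_of_ae_le _ ((ae_restrict_union_iff s t _).2 ⟨?_, ?_⟩)
  · exact (ae_le_essSup f).mono fun _ h => le_sup_of_le_left h
  · exact (ae_le_essSup f).mono fun _ h => le_sup_of_le_right h

variable [LinearOrder α]

theorem tsum_mul_essSup_Ioo_succ_le {y : ℕ → α} (hy : Monotone y) (τ : ℕ → ℝ≥0∞)
    (f : α → ℝ≥0∞) :
    ∑' i, τ i * essSup f (μ.restrict (Ioo (y i) (y (i + 1)))) ≤
      ∑' i, τ i * essSup f (μ.restrict (Ioo (y 0) (y (i + 1)))) :=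
  ENNReal.tsum_le_tsum fun i => by
    gcongr
    exact essSup_mono_measure' (Measure.restrict_mono (Ioo_subset_Ioo_left (hy i.zero_le)) le_rfl)

variable [NullSingletonClass μ]

theorem essSup_restrict_Ioo_le_sup (f : α → ℝ≥0∞) (a b c : α) :
    essSup f (μ.restrict (Ioo a b)) ≤
      essSup f (μ.restrict (Ioo a c)) ⊔ essSup f (μ.restrict (Ioo c b)) := by
  have hsub : Ioo a b ⊆ Ioo a c ∪ Ico c b := fun s hs => by
    rcases lt_or_ge s c with h | h
    exacts [Or.inl ⟨hs.1, h⟩, Or.inr ⟨h, hs.2⟩]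
  have hae : (Ioo a b : Set α) ≤ᵐ[μ] (Ioo a c ∪ Ioo c b : Set α) :=
    hsub.eventuallyLE.trans (Filter.EventuallyEq.rfl.union Ioo_ae_eq_Ico).symm.le
  exact (essSup_mono_measure' (Measure.restrict_mono_ae hae)).trans
    (essSup_restrict_union_le f _ _)

theorem essSup_restrict_Ioo_le_sum (f : α → ℝ≥0∞) (y : ℕ → α) (i : ℕ) :
    essSup f (μ.restrict (Ioo (y 0) (y i))) ≤
      ∑ j ∈ Finset.range i, essSup f (μ.restrict (Ioo (y j) (y (j + 1)))) := by
  induction i with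
  | zero => simp
  | succ i ih =>
    rw [Finset.sum_range_succ]
    exact (essSup_restrict_Ioo_le_sup f _ _ (y i)).trans
      ((sup_le_sup_right ih _).trans (sup_le le_self_add le_add_self))

theorem tsum_mul_essSup_Ioo_zero_le {ρ : ℝ≥0∞} {τ : ℕ → ℝ≥0∞} (hτ : ∀ i, τ (i + 1) ≤ ρ * τ i)
    (f : α → ℝ≥0∞) (y : ℕ → α) :
    ∑' i, τ i * essSup f (μ.restrict (Ioo (y 0) (y (i + 1)))) ≤
      (1 - ρ)⁻¹ * ∑' i, τ i * essSup f (μ.restrict (Ioo (y i) (y (i + 1)))) :=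
  (ENNReal.tsum_le_tsum fun i => by gcongr; exact essSup_restrict_Ioo_le_sum f y (i + 1)).trans
    (tsum_mul_sum_range_le_of_le_mul_succ hτ _)

end EssSup

theorem statement10 (ρ : ℝ≥0∞) (hρ : ρ < 1) :
    ∃ c₁ c₂ : ℝ≥0∞, 0 < c₁ ∧ c₂ < ∞ ∧
      ∀ (a b : EReal), a < b →
      ∀ (n : ℤ) (x : ℤ → ℝ) (τ : ℤ → ℝ≥0∞),
        (∀ k, n ≤ k → x k ∈ Iab a b) →
        (∀ k, n ≤ k → x k < x (k + 1)) →
        (∀ k, n + 1 ≤ k → 0 < τ k ∧ τ k < ∞) →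
        (∀ k, n + 1 ≤ k → τ (k + 1) ≤ ρ * τ k) →
        ∀ g : ℝ → ℝ≥0∞, Measurable g →
          c₁ * (∑' k : {k : ℤ // n + 1 ≤ k},
                τ k.1 * essSup g (volume.restrict (Ioo (x (k.1 - 1)) (x k.1)))) ≤
              (∑' k : {k : ℤ // n + 1 ≤ k},
                τ k.1 * essSup g (volume.restrict (Ioo (x n) (x k.1)))) ∧
            (∑' k : {k : ℤ // n + 1 ≤ k},
                τ k.1 * essSup g (volume.restrict (Ioo (x n) (x k.1)))) ≤
              c₂ * ∑' k : {k : ℤ // n + 1 ≤ k},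
                τ k.1 * essSup g (volume.restrict (Ioo (x (k.1 - 1)) (x k.1))) := by
  refine ⟨1, (1 - ρ)⁻¹, one_pos, ENNReal.inv_lt_top.2 (tsub_pos_of_lt hρ), ?_⟩
  intro _ _ _ n x τ _ hmono _ hρτ g _
  set y : ℕ → ℝ := fun i => x (n + i)
  have hy : Monotone y := monotone_nat_of_le_succ fun i => by
    simpa [y, add_assoc] using (hmono (n + i) (by omega)).le
  have hρτ' : ∀ i : ℕ, τ (n + 1 + ↑(i + 1)) ≤ ρ * τ (n + 1 + i) := fun i => by
    simpa [add_assoc] using hρτ (n + 1 + i) (by omega)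
  have hprev : ∀ i : ℕ, x (n + 1 + i - 1) = y i := fun i => by simp only [y]; congr 1; omega
  have hnext : ∀ i : ℕ, x (n + 1 + i) = y (i + 1) := fun i => by simp only [y]; congr 1; omega
  have hfirst : x n = y 0 := by simp [y]
  simp only [tsum_intLe_eq_tsum_nat, hprev, hnext, hfirst, one_mul]
  exact ⟨tsum_mul_essSup_Ioo_succ_le hy _ g, tsum_mul_essSup_Ioo_zero_le hρτ' g y⟩
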